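/- Fix an integer d ≥ 1 and reals m₁, m₂ > 0, n_{∞,1}, n_{∞,2} > 0, parameters α, δ, γ ∈ ℝ and ε > 0, and set α̃ = ε(1−α), δ̃ = (m₁/m₂) ε (1−δ), γ̃ = (1/d) ε m₁ (1−δ)((m₁/m₂) ε (δ−1) + δ + 1) − ε γ. Set f₂^∞(v) = n_{∞,2}(m₂/(2π))^{d/2} exp(−m₂|v|²/2). For (σ₁, σ₂, μ₁, μ₂, τ₁, τ₂) near 0, define n_i = n_{∞,i} + σ_i, P_i = n_{∞,i} + (1/d)(τ_i − m_i|μ_i|²/n_i), the mixture momentum μ₂₁ = δ̃ (n₂/n₁) μ₁ + (1−δ̃) μ₂, the mixture pressure P₂₁ = α̃ (n₂/n₁) P₁ + (1−α̃) P₂ + γ̃ |(n₂/n₁)μ₁ − μ₂|²/n₂, and M₂₁(v) = n₂^{1+d/2}/(2π P₂₁/m₂)^{d/2} · exp(− m₂ |v n₂ − μ₂₁|² / (2 P₂₁ n₂)). Then M₂₁ is differentiable at the origin for each fixed v, with partial derivatives there: ∂_{σ₁} M₂₁ = f₂^∞(v) (1/(2 n_{∞,1})) ε(1−α)(d − m₂|v|²),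 ∂_{σ₂} M₂₁ = f₂^∞(v) (1/n_{∞,2}) (1 + ((1−ε(1−α))/2)(d − m₂|v|²)), ∇_{μ₁} M₂₁ = f₂^∞(v) (ε(1−δ) m₁/n_{∞,1}) v, ∇_{μ₂} M₂₁ = f₂^∞(v) ((1 − (m₁/m₂)ε(1−δ)) m₂/n_{∞,2}) v, ∂_{τ₁} M₂₁ = f₂^∞(v) (ε(1−α)/(2 n_{∞,1})) ((m₂|v|²)/d − 1), and ∂_{τ₂} M₂₁ = f₂^∞(v) ((1−ε(1−α))/(2 n_{∞,2})) ((m₂|v|²)/d − 1). -/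

import Mathlib

open Real

/-- The equilibrium Maxwellian of species 2:
`f₂^∞(v) = n_{∞,2} (m₂/(2π))^{d/2} exp(−m₂|v|²/2)`. -/
noncomputable def equilMaxwellian2 (d : ℕ) (m₂ nInf2 : ℝ) (v : EuclideanSpace ℝ (Fin d)) : ℝ :=
  nInf2 * (m₂ / (2 * Real.pi)) ^ ((d : ℝ) / 2) * Real.exp (-m₂ * ‖v‖ ^ 2 / 2)

/-- The interspecies Maxwellian `M₂₁(σ₁,σ₂,μ₁,μ₂,τ₁,τ₂)(v)` of species 2 in the
two-species BGK model, with `n_i = n_{∞,i} + σ_i`, `P_i = n_{∞,i} + (1/d)(τ_i − m_i|μ_i|²/n_i)`,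
transformed parameters `α̃ = ε(1−α)`, `δ̃ = (m₁/m₂)ε(1−δ)`,
`γ̃ = (1/d)εm₁(1−δ)((m₁/m₂)ε(δ−1)+δ+1) − εγ`, mixture momentum
`μ₂₁ = δ̃(n₂/n₁)μ₁ + (1−δ̃)μ₂` and mixture pressure
`P₂₁ = α̃(n₂/n₁)P₁ + (1−α̃)P₂ + γ̃|(n₂/n₁)μ₁ − μ₂|²/n₂`. -/
noncomputable def interMaxwellian21 (d : ℕ) (m₁ m₂ nInf1 nInf2 α δ γ ε : ℝ)
    (p : ℝ × ℝ × EuclideanSpace ℝ (Fin d) × EuclideanSpace ℝ (Fin d) × ℝ × ℝ)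
    (v : EuclideanSpace ℝ (Fin d)) : ℝ :=
  let σ₁ := p.1
  let σ₂ := p.2.1
  let μ₁ := p.2.2.1
  let μ₂ := p.2.2.2.1
  let τ₁ := p.2.2.2.2.1
  let τ₂ := p.2.2.2.2.2
  let αt := ε * (1 - α)
  let δt := (m₁ / m₂) * ε * (1 - δ)
  let γt := (1 / (d : ℝ)) * ε * m₁ * (1 - δ) * ((m₁ / m₂) * ε * (δ - 1) + δ + 1) - ε * γ
  let n₁ := nInf1 + σ₁
  let n₂ := nInf2 + σ₂
  let P₁ := nInf1 + (1 / (d : ℝ)) * (τ₁ - m₁ * ‖μ₁‖ ^ 2 / n₁)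
  let P₂ := nInf2 + (1 / (d : ℝ)) * (τ₂ - m₂ * ‖μ₂‖ ^ 2 / n₂)
  let μ₂₁ := (δt * (n₂ / n₁)) • μ₁ + (1 - δt) • μ₂
  let P₂₁ := αt * (n₂ / n₁) * P₁ + (1 - αt) * P₂ + γt * ‖(n₂ / n₁) • μ₁ - μ₂‖ ^ 2 / n₂
  n₂ ^ ((1 : ℝ) + (d : ℝ) / 2) / (2 * Real.pi * P₂₁ / m₂) ^ ((d : ℝ) / 2) *
    Real.exp (-(m₂ * ‖n₂ • v - μ₂₁‖ ^ 2) / (2 * P₂₁ * n₂))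

/-! Near the origin `n₂ > 0` and `P₂₁ > 0`, so `M₂₁` is the exponential of
`(1 + d/2) log n₂ − (d/2) log (2π P₂₁/m₂) − m₂ |n₂ v − μ₂₁|² / (2 P₂₁ n₂)`, and the chain rule
applies to this function of the moments `(n₂, P₂₁, n₂ v − μ₂₁)`. At the origin the moments are
`(n_{∞,2}, n_{∞,2}, n_{∞,2} v)`, where the Maxwellian is `f₂^∞(v)`, and every term quadratic in
`μ₁, μ₂` has zero derivative there, so only the linear parts of `P₁, P₂, P₂₁, μ₂₁` contribute. -/

open Topology

theorem HasFDerivAt.div {𝕜 E : Type*} [NontriviallyNormedField 𝕜] [NormedAddCommGroup E]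
    [NormedSpace 𝕜 E] {c g : E → 𝕜} {c' g' : E →L[𝕜] 𝕜} {x : E} (hc : HasFDerivAt c c' x)
    (hg : HasFDerivAt g g' x) (hx : g x ≠ 0) :
    HasFDerivAt (fun y => c y / g y) ((g x)⁻¹ • c' - (c x / g x ^ 2) • g') x := by
  simp only [div_eq_mul_inv]
  refine (hc.mul ((hasDerivAt_inv hx).comp_hasFDerivAt x hg)).congr_fderiv ?_
  ext y
  simp
  ring

theorem HasFDerivAt.const_mul_norm_sq_div_of_eq_zero {E F : Type*} [NormedAddCommGroup E]
    [NormedSpace ℝ E] [NormedAddCommGroup F] [InnerProductSpace ℝ F] {f : E → F} {g : E → ℝ}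
    {f' : E →L[ℝ] F} {g' : E →L[ℝ] ℝ} {x : E} (a : ℝ) (hf : HasFDerivAt f f' x)
    (hg : HasFDerivAt g g' x) (hx : g x ≠ 0) (hfx : f x = 0) :
    HasFDerivAt (fun y => a * ‖f y‖ ^ 2 / g y) (0 : E →L[ℝ] ℝ) x := by
  refine ((hf.norm_sq.const_mul a).div hg hx).congr_fderiv ?_
  simp [hfx]

section MaxwellianProfile

variable {F : Type*} [NormedAddCommGroup F] (d : ℕ)

/-- The Maxwellian of density `n`, pressure `P` and particle mass `m` at velocity `v`, written as a
function of `(n, P, w)` with `w = n v − μ` for the momentum `μ`. -/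
noncomputable def maxwellianProfile (m : ℝ) (z : ℝ × ℝ × F) : ℝ :=
  z.1 ^ ((1 : ℝ) + (d : ℝ) / 2) / (2 * π * z.2.1 / m) ^ ((d : ℝ) / 2) *
    exp (-(m * ‖z.2.2‖ ^ 2) / (2 * z.2.1 * z.1))

noncomputable def logMaxwellianProfile (m : ℝ) (z : ℝ × ℝ × F) : ℝ :=
  (1 + (d : ℝ) / 2) * log z.1 - (d : ℝ) / 2 * log (2 * π * z.2.1 / m) -
    m * ‖z.2.2‖ ^ 2 / (2 * z.2.1 * z.1)

theorem maxwellianProfile_eq_exp_logMaxwellianProfile {m : ℝ} (hm : 0 < m) {z : ℝ × ℝ × F}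
    (hn : 0 < z.1) (hP : 0 < z.2.1) :
    maxwellianProfile d m z = exp (logMaxwellianProfile d m z) := by
  rw [maxwellianProfile, logMaxwellianProfile, rpow_def_of_pos hn,
    rpow_def_of_pos (by positivity), ← exp_sub, ← exp_add]
  ring_nf

theorem hasFDerivAt_logMaxwellianProfile [InnerProductSpace ℝ F] {m : ℝ} (hm : m ≠ 0)
    {z : ℝ × ℝ × F} (hn : z.1 ≠ 0) (hP : z.2.1 ≠ 0) :
    ∃ L : ℝ × ℝ × F →L[ℝ] ℝ, HasFDerivAt (logMaxwellianProfile d m) L z ∧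
      ∀ y : ℝ × ℝ × F, L y = (1 + (d : ℝ) / 2) * y.1 / z.1 - (d : ℝ) / 2 * y.2.1 / z.2.1 -
        m * inner ℝ z.2.2 y.2.2 / (z.2.1 * z.1) +
        m * ‖z.2.2‖ ^ 2 / (2 * z.2.1 * z.1) * (y.2.1 / z.2.1 + y.1 / z.1) := by
  have hn' := hasFDerivAt_fst (𝕜 := ℝ) (p := z)
  have hP' := (hasFDerivAt_snd (𝕜 := ℝ) (p := z)).fst
  have hw' := (hasFDerivAt_snd (𝕜 := ℝ) (p := z)).snd
  have hlogn := (hn'.log hn).const_mul (1 + (d : ℝ) / 2)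
  have hlogP := (((hP'.const_mul (2 * π)).div (hasFDerivAt_const m z) hm).log
    (by simp [hm, hP, pi_ne_zero])).const_mul ((d : ℝ) / 2)
  have hquad := (hw'.norm_sq.const_mul m).div ((hP'.const_mul 2).mul hn') (by simp [hn, hP])
  refine ⟨_, (hlogn.sub hlogP).sub hquad, fun y => ?_⟩
  simp
  field_simp
  ring

theorem hasFDerivAt_maxwellianProfile [InnerProductSpace ℝ F] {m : ℝ} (hm : 0 < m)
    {z : ℝ × ℝ × F} (hn : 0 < z.1) (hP : 0 < z.2.1) :
    ∃ L : ℝ × ℝ × F →L[ℝ] ℝ, HasFDerivAt (maxwellianProfile d m) (maxwellianProfile d m z • L) z ∧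
      ∀ y : ℝ × ℝ × F, L y = (1 + (d : ℝ) / 2) * y.1 / z.1 - (d : ℝ) / 2 * y.2.1 / z.2.1 -
        m * inner ℝ z.2.2 y.2.2 / (z.2.1 * z.1) +
        m * ‖z.2.2‖ ^ 2 / (2 * z.2.1 * z.1) * (y.2.1 / z.2.1 + y.1 / z.1) := by
  obtain ⟨L, hL, hLy⟩ := hasFDerivAt_logMaxwellianProfile d hm.ne' hn.ne' hP.ne'
  have hpos : ∀ᶠ y in 𝓝 z, 0 < y.1 ∧ 0 < y.2.1 :=
    (continuousAt_fst.eventually (lt_mem_nhds hn)).and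
      ((continuous_fst.comp continuous_snd).continuousAt.eventually (lt_mem_nhds hP))
  refine ⟨L, ?_, hLy⟩
  rw [maxwellianProfile_eq_exp_logMaxwellianProfile d hm hn hP]
  refine hL.exp.congr_of_eventuallyEq ?_
  filter_upwards [hpos] with y hy
  exact maxwellianProfile_eq_exp_logMaxwellianProfile d hm hy.1 hy.2

theorem maxwellianProfile_equilibrium {m : ℝ} (hm : 0 < m) {n : ℝ} (hn : 0 < n)
    (v : EuclideanSpace ℝ (Fin d)) :
    maxwellianProfile d m (n, n, n • v) = equilMaxwellian2 d m n v := by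
  have hratio : n / (2 * π * n / m) = m / (2 * π) := by field_simp
  have hexponent : -(m * ‖n • v‖ ^ 2) / (2 * n * n) = -m * ‖v‖ ^ 2 / 2 := by
    rw [norm_smul, norm_of_nonneg hn.le]
    field_simp
  rw [maxwellianProfile, equilMaxwellian2, rpow_add hn, rpow_one, mul_div_assoc,
    ← div_rpow hn.le (by positivity), hratio, hexponent]

end MaxwellianProfile

noncomputable def interMoments21 (d : ℕ) (m₁ m₂ nInf1 nInf2 α δ γ ε : ℝ)
    (v : EuclideanSpace ℝ (Fin d))
    (p : ℝ × ℝ × EuclideanSpace ℝ (Fin d) × EuclideanSpace ℝ (Fin d) × ℝ × ℝ) :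
    ℝ × ℝ × EuclideanSpace ℝ (Fin d) :=
  let σ₁ := p.1
  let σ₂ := p.2.1
  let μ₁ := p.2.2.1
  let μ₂ := p.2.2.2.1
  let τ₁ := p.2.2.2.2.1
  let τ₂ := p.2.2.2.2.2
  let αt := ε * (1 - α)
  let δt := (m₁ / m₂) * ε * (1 - δ)
  let γt := (1 / (d : ℝ)) * ε * m₁ * (1 - δ) * ((m₁ / m₂) * ε * (δ - 1) + δ + 1) - ε * γ
  let n₁ := nInf1 + σ₁
  let n₂ := nInf2 + σ₂
  let P₁ := nInf1 + (1 / (d : ℝ)) * (τ₁ - m₁ * ‖μ₁‖ ^ 2 / n₁)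
  let P₂ := nInf2 + (1 / (d : ℝ)) * (τ₂ - m₂ * ‖μ₂‖ ^ 2 / n₂)
  let μ₂₁ := (δt * (n₂ / n₁)) • μ₁ + (1 - δt) • μ₂
  let P₂₁ := αt * (n₂ / n₁) * P₁ + (1 - αt) * P₂ + γt * ‖(n₂ / n₁) • μ₁ - μ₂‖ ^ 2 / n₂
  (n₂, P₂₁, n₂ • v - μ₂₁)

section InterMoments

variable (d : ℕ) (m₁ m₂ : ℝ) {nInf1 nInf2 : ℝ} (α δ γ ε : ℝ) (v : EuclideanSpace ℝ (Fin d))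

theorem interMaxwellian21_eq_maxwellianProfile :
    (fun p => interMaxwellian21 d m₁ m₂ nInf1 nInf2 α δ γ ε p v) =
      maxwellianProfile d m₂ ∘ interMoments21 d m₁ m₂ nInf1 nInf2 α δ γ ε v :=
  rfl

theorem interMoments21_zero (hn₁ : nInf1 ≠ 0) :
    interMoments21 d m₁ m₂ nInf1 nInf2 α δ γ ε v 0 = (nInf2, nInf2, nInf2 • v) := by
  simp [interMoments21]
  field_simp
  ring

theorem hasFDerivAt_interMoments21_zero (hn₁ : nInf1 ≠ 0) (hn₂ : nInf2 ≠ 0) :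
    ∃ L : ℝ × ℝ × EuclideanSpace ℝ (Fin d) × EuclideanSpace ℝ (Fin d) × ℝ × ℝ →L[ℝ]
        ℝ × ℝ × EuclideanSpace ℝ (Fin d),
      HasFDerivAt (interMoments21 d m₁ m₂ nInf1 nInf2 α δ γ ε v) L 0 ∧
      ∀ (σ₁ σ₂ : ℝ) (μ₁ μ₂ : EuclideanSpace ℝ (Fin d)) (τ₁ τ₂ : ℝ),
        L (σ₁, σ₂, μ₁, μ₂, τ₁, τ₂) =
          (σ₂,
           ε * (1 - α) * (σ₂ - nInf2 / nInf1 * σ₁ + nInf2 / nInf1 * (τ₁ / d)) +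
             (1 - ε * (1 - α)) * (τ₂ / d),
           σ₂ • v - ((m₁ / m₂ * ε * (1 - δ) * (nInf2 / nInf1)) • μ₁ +
             (1 - m₁ / m₂ * ε * (1 - δ)) • μ₂)) := by
  set p₀ : ℝ × ℝ × EuclideanSpace ℝ (Fin d) × EuclideanSpace ℝ (Fin d) × ℝ × ℝ := 0
  have hσ₁ := hasFDerivAt_fst (𝕜 := ℝ) (p := p₀)
  have hrest := hasFDerivAt_snd (𝕜 := ℝ) (p := p₀)
  have hσ₂ := hrest.fst
  have hμ₁ := hrest.snd.fst
  have hμ₂ := hrest.snd.snd.fst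
  have hτ₁ := hrest.snd.snd.snd.fst
  have hτ₂ := hrest.snd.snd.snd.snd
  have hN₁ := hσ₁.const_add nInf1
  have hN₂ := hσ₂.const_add nInf2
  have hN₁0 : nInf1 + p₀.1 ≠ 0 := by simpa [p₀] using hn₁
  have hN₂0 : nInf2 + p₀.2.1 ≠ 0 := by simpa [p₀] using hn₂
  have hratio := hN₂.div hN₁ hN₁0
  have hP₁ := ((hτ₁.sub (hμ₁.const_mul_norm_sq_div_of_eq_zero m₁ hN₁ hN₁0 rfl)).const_mul
    (1 / (d : ℝ))).const_add nInf1
  have hP₂ := ((hτ₂.sub (hμ₂.const_mul_norm_sq_div_of_eq_zero m₂ hN₂ hN₂0 rfl)).const_mul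
    (1 / (d : ℝ))).const_add nInf2
  have hrel := ((hratio.smul hμ₁).sub hμ₂).const_mul_norm_sq_div_of_eq_zero
    ((1 / (d : ℝ)) * ε * m₁ * (1 - δ) * ((m₁ / m₂) * ε * (δ - 1) + δ + 1) - ε * γ) hN₂ hN₂0
    (by simp [p₀])
  have hP₂₁ := (((hratio.const_mul (ε * (1 - α))).mul hP₁).add
    (hP₂.const_mul (1 - ε * (1 - α)))).add hrel
  have hμ₂₁ := ((hratio.const_mul ((m₁ / m₂) * ε * (1 - δ))).smul hμ₁).add
    (hμ₂.const_smul (1 - (m₁ / m₂) * ε * (1 - δ)))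
  refine ⟨_, hN₂.prodMk (hP₂₁.prodMk ((hN₂.smul_const v).sub hμ₂₁)), ?_⟩
  intro σ₁ σ₂ μ₁ μ₂ τ₁ τ₂
  simp [p₀]
  field_simp
  ring

end InterMoments

theorem interMaxwellian21_hasFDerivAt_zero_general (d : ℕ) (hd : 1 ≤ d) (m₁ m₂ nInf1 nInf2 : ℝ)
    (hm₂ : 0 < m₂) (hn₁ : 0 < nInf1) (hn₂ : 0 < nInf2) (α δ γ ε : ℝ)
    (v : EuclideanSpace ℝ (Fin d)) :
    ∃ L : (ℝ × ℝ × EuclideanSpace ℝ (Fin d) × EuclideanSpace ℝ (Fin d) × ℝ × ℝ) →L[ℝ] ℝ,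
      HasFDerivAt (fun p => interMaxwellian21 d m₁ m₂ nInf1 nInf2 α δ γ ε p v) L
        (0 : ℝ × ℝ × EuclideanSpace ℝ (Fin d) × EuclideanSpace ℝ (Fin d) × ℝ × ℝ) ∧
      ∀ (σ₁ σ₂ : ℝ) (μ₁ μ₂ : EuclideanSpace ℝ (Fin d)) (τ₁ τ₂ : ℝ),
        L (σ₁, σ₂, μ₁, μ₂, τ₁, τ₂) =
          equilMaxwellian2 d m₂ nInf2 v * (1 / (2 * nInf1)) * (ε * (1 - α)) * (d - m₂ * ‖v‖ ^ 2) * σ₁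
          + equilMaxwellian2 d m₂ nInf2 v * (1 / nInf2) *
              (1 + ((1 - ε * (1 - α)) / 2) * (d - m₂ * ‖v‖ ^ 2)) * σ₂
          + equilMaxwellian2 d m₂ nInf2 v * (ε * (1 - δ) * m₁ / nInf1) * (inner ℝ v μ₁ : ℝ)
          + equilMaxwellian2 d m₂ nInf2 v * ((1 - (m₁ / m₂) * ε * (1 - δ)) * m₂ / nInf2) *
              (inner ℝ v μ₂ : ℝ)
          + equilMaxwellian2 d m₂ nInf2 v * (ε * (1 - α) / (2 * nInf1)) *
              (m₂ * ‖v‖ ^ 2 / d - 1) * τ₁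
          + equilMaxwellian2 d m₂ nInf2 v * ((1 - ε * (1 - α)) / (2 * nInf2)) *
              (m₂ * ‖v‖ ^ 2 / d - 1) * τ₂ := by
  obtain ⟨Lm, hLm, hLm_apply⟩ :=
    hasFDerivAt_interMoments21_zero d m₁ m₂ α δ γ ε v hn₁.ne' hn₂.ne'
  obtain ⟨Lp, hLp, hLp_apply⟩ :=
    hasFDerivAt_maxwellianProfile d hm₂ (z := (nInf2, nInf2, nInf2 • v)) hn₂ hn₂
  rw [← interMoments21_zero d m₁ m₂ α δ γ ε v hn₁.ne'] at hLp
  rw [interMaxwellian21_eq_maxwellianProfile]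
  refine ⟨_, hLp.comp 0 hLm, fun σ₁ σ₂ μ₁ μ₂ τ₁ τ₂ => ?_⟩
  have hd' : (d : ℝ) ≠ 0 := Nat.cast_ne_zero.mpr (by omega)
  rw [ContinuousLinearMap.comp_apply, smul_apply, hLm_apply, hLp_apply,
    interMoments21_zero d m₁ m₂ α δ γ ε v hn₁.ne', maxwellianProfile_equilibrium d hm₂ hn₂]
  simp only [smul_eq_mul, inner_sub_right, inner_add_right, real_inner_smul_left,
    real_inner_smul_right, real_inner_self_eq_norm_sq, norm_smul, norm_of_nonneg hn₂.le]
  field_simp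
  ring

/-- For `d ≥ 1`, `m₁, m₂ > 0`, `n_{∞,1}, n_{∞,2} > 0`, parameters `α, δ, γ` and `ε > 0`,
the interspecies Maxwellian `M₂₁` is differentiable at the origin for each fixed `v`,
with the stated partial derivatives. -/
theorem interMaxwellian21_hasFDerivAt_zero (d : ℕ) (hd : 1 ≤ d) (m₁ m₂ nInf1 nInf2 : ℝ)
    (hm₁ : 0 < m₁) (hm₂ : 0 < m₂) (hn₁ : 0 < nInf1) (hn₂ : 0 < nInf2) (α δ γ ε : ℝ)
    (hε : 0 < ε) (v : EuclideanSpace ℝ (Fin d)) :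
    ∃ L : (ℝ × ℝ × EuclideanSpace ℝ (Fin d) × EuclideanSpace ℝ (Fin d) × ℝ × ℝ) →L[ℝ] ℝ,
      HasFDerivAt (fun p => interMaxwellian21 d m₁ m₂ nInf1 nInf2 α δ γ ε p v) L
        (0 : ℝ × ℝ × EuclideanSpace ℝ (Fin d) × EuclideanSpace ℝ (Fin d) × ℝ × ℝ) ∧
      ∀ (σ₁ σ₂ : ℝ) (μ₁ μ₂ : EuclideanSpace ℝ (Fin d)) (τ₁ τ₂ : ℝ),
        L (σ₁, σ₂, μ₁, μ₂, τ₁, τ₂) =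
          equilMaxwellian2 d m₂ nInf2 v * (1 / (2 * nInf1)) * (ε * (1 - α)) * (d - m₂ * ‖v‖ ^ 2) * σ₁
          + equilMaxwellian2 d m₂ nInf2 v * (1 / nInf2) *
              (1 + ((1 - ε * (1 - α)) / 2) * (d - m₂ * ‖v‖ ^ 2)) * σ₂
          + equilMaxwellian2 d m₂ nInf2 v * (ε * (1 - δ) * m₁ / nInf1) * (inner ℝ v μ₁ : ℝ)
          + equilMaxwellian2 d m₂ nInf2 v * ((1 - (m₁ / m₂) * ε * (1 - δ)) * m₂ / nInf2) *
              (inner ℝ v μ₂ : ℝ)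
          + equilMaxwellian2 d m₂ nInf2 v * (ε * (1 - α) / (2 * nInf1)) *
              (m₂ * ‖v‖ ^ 2 / d - 1) * τ₁
          + equilMaxwellian2 d m₂ nInf2 v * ((1 - ε * (1 - α)) / (2 * nInf2)) *
              (m₂ * ‖v‖ ^ 2 / d - 1) * τ₂ :=
  interMaxwellian21_hasFDerivAt_zero_general d hd m₁ m₂ nInf1 nInf2 hm₂ hn₁ hn₂ α δ γ ε v
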